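/- arXiv:1603.07504 — 3 statements merged into one kernel-verified Lean document; each statement's English description precedes it below -/
import Mathlib

section
/- Let G be a finite connected simple graph with at least one edge and let l ≥ 2. Then the stationary distribution of the expanded Markov chain is unique: if μ is any probability distribution on the set of walks with l vertices in G satisfying, for every walk (x_2, …, x_{l+1}), Σ_{x_1 adjacent to x_2} μ(x_1, …, x_l)·(1/d_{x_l}) = μ(x_2, …, x_{l+1}), then μ(x_1, …, x_l) = (1/(2m)) · ∏_{i=2}^{l−1} 1/d_{x_i} for every walk (x_1, …, x_l). -/
open Finset

/-- A walk with `l` vertices in `G`: a sequence `x : Fin l → V` such that consecutive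
vertices are adjacent. -/
def IsWalkSeq {V : Type*} (G : SimpleGraph V) (l : ℕ) (x : Fin l → V) : Prop :=
  ∀ (i : ℕ) (h : i < l - 1), G.Adj (x ⟨i, by omega⟩) (x ⟨i + 1, by omega⟩)

instance {V : Type*} (G : SimpleGraph V) [DecidableRel G.Adj] (l : ℕ) :
    DecidablePred (IsWalkSeq G l) := fun _ => Nat.decidableBallLT _ _

/-- `π_e(x_1, …, x_l) = (1/(2m)) · ∏_{i=2}^{l−1} 1/d_{x_i}` (with 0-based indexing the
product runs over the interior indices `1 ≤ i` and `i + 1 < l`). -/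
noncomputable def piE {V : Type*} [Fintype V] [DecidableEq V] (G : SimpleGraph V)
    [DecidableRel G.Adj] (l : ℕ) (x : Fin l → V) : ℝ :=
  (1 / (2 * (G.edgeFinset.card : ℝ))) *
    ∏ i ∈ Finset.univ.filter (fun i : Fin l => 1 ≤ (i : ℕ) ∧ (i : ℕ) + 1 < l),
      (1 / (G.degree (x i) : ℝ))

set_option linter.unusedSectionVars false

section Aux
variable {V : Type*} [Fintype V] [DecidableEq V] (G : SimpleGraph V) [DecidableRel G.Adj]

noncomputable def dinv (l : ℕ) (x : Fin l → V) (i : ℕ) : ℝ :=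
  if h : i < l then 1 / (G.degree (x ⟨i, h⟩) : ℝ) else 1

lemma dinv_lt (l : ℕ) (x : Fin l → V) (i : ℕ) (h : i < l) :
    dinv G l x i = 1 / (G.degree (x ⟨i, h⟩) : ℝ) := dif_pos h

lemma EWinterior_prod_eq (l : ℕ) (x : Fin l → V) :
    ∏ i ∈ Finset.univ.filter (fun i : Fin l => 1 ≤ (i : ℕ) ∧ (i : ℕ) + 1 < l),
      (1 / (G.degree (x i) : ℝ))
      = ∏ i ∈ Finset.range (l - 2), dinv G l x (i + 1) := by
  rw [Finset.prod_filter]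
  have h1 : (∏ i : Fin l, if 1 ≤ (i:ℕ) ∧ (i:ℕ)+1 < l then (1 / (G.degree (x i):ℝ)) else 1)
      = ∏ i : Fin l, (fun n : ℕ => if 1 ≤ n ∧ n+1 < l then dinv G l x n else 1) ((i:ℕ)) := by
    refine Finset.prod_congr rfl (fun i _ => ?_)
    simp only [dinv, i.isLt, dif_pos, Fin.eta]
  rw [h1, Fin.prod_univ_eq_prod_range (fun n : ℕ => if 1 ≤ n ∧ n+1 < l then dinv G l x n else 1) l]
  have h2 : (∏ i ∈ Finset.range l, (fun n : ℕ => if 1 ≤ n ∧ n+1 < l then dinv G l x n else 1) i)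
      = ∏ i ∈ Finset.Ico 1 (l-1), (fun n : ℕ => if 1 ≤ n ∧ n+1 < l then dinv G l x n else 1) i := by
    refine (Finset.prod_subset ?_ ?_).symm
    · intro a ha; simp only [Finset.mem_Ico] at ha; simp only [Finset.mem_range]; omega
    · intro a _ ha; simp only [Finset.mem_Ico, not_and_or, not_le, not_lt] at ha
      simp only [ite_eq_right_iff]; intro hc; omega
  rw [h2, Finset.prod_Ico_eq_prod_range]
  refine Finset.prod_congr (by rw [Nat.sub_sub]) (fun i hi => ?_)
  simp only [Finset.mem_range] at hi
  rw [if_pos (by omega), Nat.add_comm 1 i]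

def predFn (l : ℕ) (y : Fin l → V) (v : V) : Fin l → V :=
  fun i => if (i : ℕ) = 0 then v
    else y ⟨(i : ℕ) - 1, lt_of_le_of_lt (Nat.sub_le _ _) i.isLt⟩

lemma walk_degree_pos {l : ℕ} (hl : 2 ≤ l) {x : Fin l → V} (hx : IsWalkSeq G l x)
    (j : ℕ) (hj : j < l) : 0 < G.degree (x ⟨j, hj⟩) := by
  rcases lt_or_ge (j + 1) l with h | h
  · have hadj := hx j (by omega)
    rw [G.degree_pos_iff_exists_adj]
    exact ⟨_, hadj⟩
  · have hadj := hx (j - 1) (by omega)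
    rw [G.degree_pos_iff_exists_adj]
    have he : (⟨j - 1 + 1, by omega⟩ : Fin l) = ⟨j, hj⟩ := Fin.ext (by simp; omega)
    rw [he] at hadj
    exact ⟨_, hadj.symm⟩

lemma dinv_pos {l : ℕ} (hl : 2 ≤ l) {x : Fin l → V} (hx : IsWalkSeq G l x) (i : ℕ) :
    0 < dinv G l x i := by
  unfold dinv
  split
  · next h => 
    have := walk_degree_pos G hl hx i h
    positivity
  · norm_num

lemma piE_eq (l : ℕ) (x : Fin l → V) :
    piE G l x = (1 / (2 * (G.edgeFinset.card : ℝ))) * ∏ i ∈ Finset.range (l - 2), dinv G l x (i + 1) := by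
  rw [piE, EWinterior_prod_eq]

lemma piE_pos (hm : 0 < G.edgeFinset.card) {l : ℕ} (hl : 2 ≤ l) {x : Fin l → V}
    (hx : IsWalkSeq G l x) : 0 < piE G l x := by
  rw [piE_eq]
  have hm' : (0:ℝ) < (G.edgeFinset.card : ℝ) := by exact_mod_cast hm
  refine mul_pos (by positivity) (Finset.prod_pos fun i _ => dinv_pos G hl hx _)

lemma predFn_isWalkSeq {l : ℕ} (hl : 2 ≤ l) {y : Fin l → V} (hy : IsWalkSeq G l y)
    {v : V} (hv : G.Adj (y ⟨0, by omega⟩) v) : IsWalkSeq G l (predFn l y v) := by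
  intro i h
  rcases Nat.eq_zero_or_pos i with rfl | hi
  · have h1 : predFn l y v ⟨0, by omega⟩ = v := if_pos rfl
    have h2 : predFn l y v ⟨1, by omega⟩ = y ⟨0, by omega⟩ := by
      simp [predFn]
    rw [h1, h2]
    exact hv.symm
  · have h1 : predFn l y v ⟨i, by omega⟩ = y ⟨i - 1, by omega⟩ := by
      simp [predFn]; omega
    have h2 : predFn l y v ⟨i + 1, by omega⟩ = y ⟨i, by omega⟩ := by
      simp [predFn]
    rw [h1, h2]
    have := hy (i - 1) (by omega)
    have he : (⟨i - 1 + 1, by omega⟩ : Fin l) = ⟨i, by omega⟩ := Fin.ext (by simp; omega)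
    rwa [he] at this

lemma dinv_predFn {l : ℕ} (y : Fin l → V) (v : V) (i : ℕ) (h : i + 1 < l) :
    dinv G l (predFn l y v) (i + 1) = dinv G l y i := by
  rw [dinv_lt G l _ _ h, dinv_lt G l _ _ (by omega : i < l)]
  have he : (predFn l y v) ⟨i + 1, h⟩ = y ⟨i, by omega⟩ := by simp [predFn]
  rw [he]


set_option maxHeartbeats 1000000 in
lemma piE_stat (l : ℕ) (hl : 2 ≤ l) (y : Fin l → V) (hy : IsWalkSeq G l y) :
    ∑ v ∈ G.neighborFinset (y ⟨0, by omega⟩),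
      piE G l (predFn l y v) * (1 / (G.degree (y ⟨l - 2, by omega⟩) : ℝ)) = piE G l y := by
  have hd0 : 0 < G.degree (y ⟨0, by omega⟩) := walk_degree_pos G hl hy 0 (by omega)
  have hkey : ∀ v ∈ G.neighborFinset (y ⟨0, by omega⟩),
      piE G l (predFn l y v) * (1 / (G.degree (y ⟨l - 2, by omega⟩) : ℝ))
      = (1 / (2 * (G.edgeFinset.card : ℝ))) *
        ((∏ i ∈ Finset.range (l - 2), dinv G l y i) * dinv G l y (l - 2)) := by
    intro v _
    rw [piE_eq]
    have hp : ∏ i ∈ Finset.range (l - 2), dinv G l (predFn l y v) (i + 1)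
        = ∏ i ∈ Finset.range (l - 2), dinv G l y i := by
      refine Finset.prod_congr rfl (fun i hi => ?_)
      simp only [Finset.mem_range] at hi
      exact dinv_predFn G y v i (by omega)
    have hD : (1 / (G.degree (y ⟨l - 2, by omega⟩) : ℝ)) = dinv G l y (l - 2) :=
      (dinv_lt G l y (l - 2) (by omega)).symm
    rw [hp, hD]; ring
  rw [Finset.sum_congr rfl hkey, Finset.sum_const, SimpleGraph.card_neighborFinset_eq_degree,
    nsmul_eq_mul, piE_eq]
  have h1 : (∏ i ∈ Finset.range (l - 2), dinv G l y i) * dinv G l y (l - 2)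
      = ∏ i ∈ Finset.range (l - 2 + 1), dinv G l y i := (Finset.prod_range_succ _ _).symm
  have h2 : ∏ i ∈ Finset.range (l - 2 + 1), dinv G l y i
      = (∏ i ∈ Finset.range (l - 2), dinv G l y (i + 1)) * dinv G l y 0 :=
    Finset.prod_range_succ' _ _
  have h3 : dinv G l y 0 = 1 / (G.degree (y ⟨0, by omega⟩) : ℝ) := dinv_lt G l y 0 (by omega)
  have hd0' : ((G.degree (y ⟨0, by omega⟩) : ℝ)) ≠ 0 := by positivity
  rw [h1, h2, h3]
  have hc : (G.degree (y ⟨0, by omega⟩) : ℝ) * (1 / (G.degree (y ⟨0, by omega⟩) : ℝ)) = 1 :=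
    mul_one_div_cancel hd0'
  linear_combination (1 / (2 * (G.edgeFinset.card : ℝ)) *
    ∏ i ∈ Finset.range (l - 2), dinv G l y (i + 1)) * hc

noncomputable def Swalk (l : ℕ) : ℝ :=
  ∑ x : Fin l → V, if IsWalkSeq G l x then ∏ i ∈ Finset.range (l - 2), dinv G l x (i + 1) else 0

lemma Swalk_two : Swalk G 2 = 2 * (G.edgeFinset.card : ℝ) := by
  have h0 : ∀ x : Fin 2 → V,
      (if IsWalkSeq G 2 x then ∏ i ∈ Finset.range 0, dinv G 2 x (i + 1) else (0:ℝ))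
      = if G.Adj (x 0) (x 1) then 1 else 0 := by
    intro x
    have : IsWalkSeq G 2 x ↔ G.Adj (x 0) (x 1) := by
      constructor
      · intro h; exact h 0 (by omega)
      · intro h i hi
        interval_cases i
        exact h
    simp [this]
  have h1 : Swalk G 2 = ∑ p : V × V, if G.Adj p.1 p.2 then (1:ℝ) else 0 := by
    rw [Swalk]
    rw [Finset.sum_congr rfl (fun x _ => h0 x)]
    exact Fintype.sum_equiv (finTwoArrowEquiv V) _ _ (fun x => rfl)
  rw [h1, Fintype.sum_prod_type]
  have h2 : ∀ a : V, (∑ b : V, if G.Adj a b then (1:ℝ) else 0) = (G.degree a : ℝ) := by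
    intro a
    rw [Finset.sum_boole]
    rw [SimpleGraph.degree, SimpleGraph.neighborFinset_eq_filter]
  rw [Finset.sum_congr rfl (fun a _ => h2 a)]
  rw [← Nat.cast_sum]
  rw [SimpleGraph.sum_degrees_eq_twice_card_edges]
  push_cast
  ring

lemma snoc_lt {l : ℕ} (y : Fin l → V) (v : V) (i : ℕ) (h : i < l) :
    (Fin.snoc y v : Fin (l+1) → V) ⟨i, by omega⟩ = y ⟨i, h⟩ := by
  have he : (⟨i, by omega⟩ : Fin (l+1)) = Fin.castSucc ⟨i, h⟩ := rfl
  rw [he, Fin.snoc_castSucc]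

lemma snoc_last' {l : ℕ} (y : Fin l → V) (v : V) (h : l < l + 1) :
    (Fin.snoc y v : Fin (l+1) → V) ⟨l, h⟩ = v := by
  have he : (⟨l, h⟩ : Fin (l+1)) = Fin.last l := rfl
  rw [he, Fin.snoc_last]

lemma snoc_walk_iff {l : ℕ} (hl : 1 ≤ l) (y : Fin l → V) (v : V) :
    IsWalkSeq G (l+1) (Fin.snoc y v) ↔
      IsWalkSeq G l y ∧ G.Adj (y ⟨l - 1, by omega⟩) v := by
  constructor
  · intro h
    constructor
    · intro i hi
      have := h i (by omega)
      rwa [snoc_lt y v i (by omega), snoc_lt y v (i+1) (by omega)] at this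
    · have := h (l-1) (by omega)
      have he : l - 1 + 1 = l := by omega
      rw [snoc_lt y v (l-1) (by omega)] at this
      rw [show (⟨l-1+1, by omega⟩ : Fin (l+1)) = ⟨l, by omega⟩ from Fin.ext (by simp [he])] at this
      rwa [snoc_last' y v (by omega)] at this
  · rintro ⟨hw, ha⟩ i hi
    rcases lt_or_ge i (l-1) with h' | h'
    · rw [snoc_lt y v i (by omega), snoc_lt y v (i+1) (by omega)]
      exact hw i h'
    · have hi' : i = l - 1 := by omega
      subst hi'
      rw [snoc_lt y v (l-1) (by omega)]
      rw [show (⟨l-1+1, by omega⟩ : Fin (l+1)) = ⟨l, by omega⟩ from Fin.ext (by simp; omega)]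
      rwa [snoc_last' y v (by omega)]

lemma dinv_snoc {l : ℕ} (y : Fin l → V) (v : V) (i : ℕ) (h : i < l) :
    dinv G (l+1) (Fin.snoc y v) i = dinv G l y i := by
  rw [dinv_lt G (l+1) _ i (by omega), dinv_lt G l y i h, snoc_lt y v i h]

lemma Swalk_succ {l : ℕ} (hl : 2 ≤ l) : Swalk G (l+1) = Swalk G l := by
  have key : Swalk G (l+1) = ∑ p : V × (Fin l → V),
      (if IsWalkSeq G (l+1) (Fin.snoc p.2 p.1) then
        ∏ i ∈ Finset.range (l + 1 - 2), dinv G (l+1) (Fin.snoc p.2 p.1) (i + 1) else 0) := by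
    rw [Swalk]
    exact (Fintype.sum_equiv (Fin.snocEquiv (fun _ => V)) _ _ (fun p => rfl)).symm
  rw [key, Fintype.sum_prod_type, Finset.sum_comm]
  rw [Swalk]
  refine Finset.sum_congr rfl (fun y _ => ?_)
  by_cases hA : IsWalkSeq G l y
  · have hd : 0 < G.degree (y ⟨l - 1, by omega⟩) := walk_degree_pos G hl hA (l-1) (by omega)
    have hterm : ∀ v : V,
        (if IsWalkSeq G (l+1) (Fin.snoc y v) then
          ∏ i ∈ Finset.range (l + 1 - 2), dinv G (l+1) (Fin.snoc y v) (i + 1) else (0:ℝ))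
        = if G.Adj (y ⟨l - 1, by omega⟩) v then
            ((∏ i ∈ Finset.range (l - 2), dinv G l y (i + 1)) * dinv G l y (l - 1)) else 0 := by
      intro v
      simp only [snoc_walk_iff G (by omega) y v]
      by_cases hB : G.Adj (y ⟨l - 1, by omega⟩) v
      · rw [if_pos ⟨hA, hB⟩, if_pos hB]
        have hp : ∏ i ∈ Finset.range (l + 1 - 2), dinv G (l+1) (Fin.snoc y v) (i + 1)
            = ∏ i ∈ Finset.range (l - 1), dinv G l y (i + 1) := by
          rw [show l + 1 - 2 = l - 1 by omega]
          exact Finset.prod_congr rfl (fun i hi => by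
            rw [dinv_snoc G y v (i+1) (by simp only [Finset.mem_range] at hi; omega)])
        rw [hp, show l - 1 = (l - 2) + 1 by omega, Finset.prod_range_succ,
          show l - 2 + 1 = l - 1 by omega]
      · rw [if_neg (by tauto), if_neg hB]
    rw [Finset.sum_congr rfl (fun v _ => hterm v), ← Finset.sum_filter]
    rw [Finset.sum_const, ← SimpleGraph.neighborFinset_eq_filter,
      SimpleGraph.card_neighborFinset_eq_degree, nsmul_eq_mul, if_pos hA]
    have hD : dinv G l y (l - 1) = 1 / (G.degree (y ⟨l - 1, by omega⟩) : ℝ) :=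
      dinv_lt G l y (l-1) (by omega)
    have hd' : ((G.degree (y ⟨l - 1, by omega⟩) : ℝ)) ≠ 0 := by positivity
    have hc : (G.degree (y ⟨l - 1, by omega⟩) : ℝ) * (1 / (G.degree (y ⟨l - 1, by omega⟩) : ℝ)) = 1 :=
      mul_one_div_cancel hd'
    rw [hD]
    linear_combination (∏ i ∈ Finset.range (l - 2), dinv G l y (i + 1)) * hc
  · have hterm : ∀ v : V,
        (if IsWalkSeq G (l+1) (Fin.snoc y v) then
          ∏ i ∈ Finset.range (l + 1 - 2), dinv G (l+1) (Fin.snoc y v) (i + 1) else (0:ℝ)) = 0 := by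
      intro v
      simp only [snoc_walk_iff G (by omega) y v]
      rw [if_neg]
      tauto
    rw [Finset.sum_congr rfl (fun v _ => hterm v), Finset.sum_const_zero, if_neg hA]

lemma Swalk_eq {l : ℕ} (hl : 2 ≤ l) : Swalk G l = 2 * (G.edgeFinset.card : ℝ) := by
  induction l, hl using Nat.le_induction with
  | base => exact Swalk_two G
  | succ n hn ih => rw [Swalk_succ G hn, ih]

lemma sum_piE (hm : 0 < G.edgeFinset.card) {l : ℕ} (hl : 2 ≤ l) :
    ∑ x ∈ Finset.univ.filter (IsWalkSeq G l), piE G l x = 1 := by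
  have hm' : ((G.edgeFinset.card : ℝ)) ≠ 0 := by positivity
  rw [Finset.sum_filter]
  have h2 : ∀ x : Fin l → V, (if IsWalkSeq G l x then piE G l x else 0)
      = (1 / (2 * (G.edgeFinset.card : ℝ))) *
        (if IsWalkSeq G l x then ∏ i ∈ Finset.range (l - 2), dinv G l x (i + 1) else 0) := by
    intro x
    by_cases h : IsWalkSeq G l x
    · rw [if_pos h, if_pos h, piE_eq]
    · rw [if_neg h, if_neg h, mul_zero]
  rw [Finset.sum_congr rfl (fun x _ => h2 x), ← Finset.mul_sum]
  rw [show (∑ x : Fin l → V, if IsWalkSeq G l x then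
      ∏ i ∈ Finset.range (l - 2), dinv G l x (i + 1) else (0:ℝ)) = Swalk G l from rfl]
  rw [Swalk_eq G hl]
  rw [div_mul_eq_mul_div, one_mul, div_self (by positivity)]

lemma exists_walkSeq (hm : 0 < G.edgeFinset.card) {l : ℕ} (hl : 2 ≤ l) :
    ∃ x : Fin l → V, IsWalkSeq G l x := by
  obtain ⟨e, he⟩ := Finset.card_pos.mp hm
  rw [SimpleGraph.mem_edgeFinset] at he
  obtain ⟨a, b, hab⟩ : ∃ a b : V, G.Adj a b := by
    revert he
    refine e.ind (fun a b he => ?_)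
    exact ⟨a, b, (SimpleGraph.mem_edgeSet G).mp he⟩
  refine ⟨fun i => if (i : ℕ) % 2 = 0 then a else b, fun i hi => ?_⟩
  by_cases h : i % 2 = 0
  · simpa [h, show (i+1) % 2 ≠ 0 by omega] using hab
  · simpa [h, show (i+1) % 2 = 0 by omega] using hab.symm

end Aux


set_option maxHeartbeats 1000000 in
/-- the stationary distribution of the expanded Markov chain is unique:
any probability distribution `μ` on the set of walks with `l` vertices satisfying the
invariance equations must equal `π_e` on every walk. -/
theorem expanded_chain_stationary_unique
    {V : Type*} [Fintype V] [DecidableEq V] (G : SimpleGraph V) [DecidableRel G.Adj]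
    (hconn : G.Connected) (hm : 0 < G.edgeFinset.card) (l : ℕ) (hl : 2 ≤ l)
    (μ : (Fin l → V) → ℝ)
    (hnonneg : ∀ x : Fin l → V, IsWalkSeq G l x → 0 ≤ μ x)
    (hsum : ∑ x ∈ Finset.univ.filter (IsWalkSeq G l), μ x = 1)
    (hstat : ∀ y : Fin l → V, IsWalkSeq G l y →
      ∑ v ∈ G.neighborFinset (y ⟨0, by omega⟩),
        μ (fun i : Fin l => if (i : ℕ) = 0 then v
            else y ⟨(i : ℕ) - 1, lt_of_le_of_lt (Nat.sub_le _ _) i.isLt⟩) *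
          (1 / (G.degree (y ⟨l - 2, by omega⟩) : ℝ))
        = μ y) :
    ∀ x : Fin l → V, IsWalkSeq G l x → μ x = piE G l x := by
  have hstat' : ∀ y : Fin l → V, IsWalkSeq G l y →
      ∑ v ∈ G.neighborFinset (y ⟨0, by omega⟩),
        μ (predFn l y v) * (1 / (G.degree (y ⟨l - 2, by omega⟩) : ℝ)) = μ y := hstat
  obtain ⟨x₀, hx₀⟩ := exists_walkSeq G hm hl
  set W : Finset (Fin l → V) := Finset.univ.filter (IsWalkSeq G l) with hW
  have hWne : ((W.image fun x => μ x / piE G l x)).Nonempty :=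
    ⟨_, Finset.mem_image_of_mem _ (Finset.mem_filter.mpr ⟨Finset.mem_univ _, hx₀⟩)⟩
  set c : ℝ := (W.image fun x => μ x / piE G l x).max' hWne with hc
  have hle : ∀ x : Fin l → V, IsWalkSeq G l x → μ x ≤ c * piE G l x := by
    intro x hx
    have hp := piE_pos G hm hl hx
    have h1 := Finset.le_max' (W.image fun x => μ x / piE G l x) (μ x / piE G l x)
      (Finset.mem_image_of_mem _ (Finset.mem_filter.mpr ⟨Finset.mem_univ _, hx⟩))
    rw [← hc] at h1
    exact (div_le_iff₀ hp).mp h1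
  have hattain : ∃ xs : Fin l → V, IsWalkSeq G l xs ∧ μ xs = c * piE G l xs := by
    obtain ⟨x, hxW, hxe⟩ := Finset.mem_image.mp (Finset.max'_mem _ hWne)
    refine ⟨x, (Finset.mem_filter.mp hxW).2, ?_⟩
    have hp := piE_pos G hm hl (Finset.mem_filter.mp hxW).2
    rw [hc, ← hxe, div_mul_cancel₀ _ (ne_of_gt hp)]
  have pred_attain : ∀ y : Fin l → V, IsWalkSeq G l y → μ y = c * piE G l y →
      ∀ v : V, G.Adj (y ⟨0, by omega⟩) v →
        μ (predFn l y v) = c * piE G l (predFn l y v) := by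
    intro y hy h0 v hv
    have h1 := hstat' y hy
    have h2 := piE_stat G l hl y hy
    have hdpos : 0 < G.degree (y ⟨l - 2, by omega⟩) := walk_degree_pos G hl hy (l-2) (by omega)
    set D : ℝ := 1 / (G.degree (y ⟨l - 2, by omega⟩) : ℝ) with hD
    have hDpos : 0 < D := by rw [hD]; positivity
    have hsum0 : ∑ u ∈ G.neighborFinset (y ⟨0, by omega⟩),
        (c * piE G l (predFn l y u) - μ (predFn l y u)) * D = 0 := by
      have hexp : ∀ u ∈ G.neighborFinset (y ⟨0, by omega⟩),
          (c * piE G l (predFn l y u) - μ (predFn l y u)) * D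
          = c * (piE G l (predFn l y u) * D) - μ (predFn l y u) * D := fun u _ => by ring
      rw [Finset.sum_congr rfl hexp, Finset.sum_sub_distrib, ← Finset.mul_sum, h1, h2, h0]
      ring
    have hnn : ∀ u ∈ G.neighborFinset (y ⟨0, by omega⟩),
        0 ≤ (c * piE G l (predFn l y u) - μ (predFn l y u)) * D := by
      intro u hu
      have hwp : IsWalkSeq G l (predFn l y u) :=
        predFn_isWalkSeq G hl hy (by simpa using hu)
      have := hle _ hwp
      have h3 : 0 ≤ c * piE G l (predFn l y u) - μ (predFn l y u) := by linarith
      exact mul_nonneg h3 hDpos.le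
    have hz := (Finset.sum_eq_zero_iff_of_nonneg hnn).mp hsum0 v (by simpa using hv)
    rcases mul_eq_zero.mp hz with h | h
    · linarith
    · exact absurd h (ne_of_gt hDpos)
  have hwin_walk : ∀ (w : ℕ → V) (N : ℕ), (∀ i, i + 1 < N → G.Adj (w i) (w (i+1))) →
      ∀ k, k + l ≤ N → IsWalkSeq G l (fun i : Fin l => w (k + (i : ℕ))) := by
    intro w N hw k hk i hi
    exact hw (k + i) (by omega)
  have window_step : ∀ (w : ℕ → V) (N : ℕ), (∀ i, i + 1 < N → G.Adj (w i) (w (i+1))) →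
      ∀ k, k + 1 + l ≤ N →
      μ (fun i : Fin l => w (k + 1 + (i : ℕ))) = c * piE G l (fun i : Fin l => w (k + 1 + (i : ℕ))) →
      μ (fun i : Fin l => w (k + (i : ℕ))) = c * piE G l (fun i : Fin l => w (k + (i : ℕ))) := by
    intro w N hw k hk h0
    have hy : IsWalkSeq G l (fun i : Fin l => w (k + 1 + (i : ℕ))) :=
      hwin_walk w N hw (k+1) (by omega)
    have hadj : G.Adj ((fun i : Fin l => w (k + 1 + (i : ℕ))) ⟨0, by omega⟩) (w k) := by
      have := hw k (by omega)
      simpa using this.symm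
    have hpe : predFn l (fun i : Fin l => w (k + 1 + (i : ℕ))) (w k)
        = fun i : Fin l => w (k + (i : ℕ)) := by
      funext i
      by_cases hi : (i : ℕ) = 0
      · simp [predFn, hi]
      · simp only [predFn, hi, if_false, ite_false]
        congr 1
        omega
    have := pred_attain _ hy h0 (w k) hadj
    rwa [hpe] at this
  have window_all : ∀ (w : ℕ → V) (N : ℕ), (∀ i, i + 1 < N → G.Adj (w i) (w (i+1))) →
      ∀ (j k : ℕ), k + j + l ≤ N →
      μ (fun i : Fin l => w (k + j + (i : ℕ))) = c * piE G l (fun i : Fin l => w (k + j + (i : ℕ))) →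
      μ (fun i : Fin l => w (k + (i : ℕ))) = c * piE G l (fun i : Fin l => w (k + (i : ℕ))) := by
    intro w N hw j
    induction j with
    | zero => intro k _ h0; exact h0
    | succ j ih =>
      intro k hk h0
      have he : (fun i : Fin l => w (k + (j+1) + (i : ℕ)))
          = fun i : Fin l => w (k + 1 + j + (i : ℕ)) := by
        funext i; congr 1; omega
      rw [he] at h0
      exact window_step w N hw k (by omega) (ih (k+1) (by omega) h0)
  have hall : ∀ x : Fin l → V, IsWalkSeq G l x → μ x = c * piE G l x := by
    obtain ⟨xs, hxs, hxse⟩ := hattain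
    intro x hx
    obtain ⟨p⟩ := hconn.preconnected (x ⟨l - 1, by omega⟩) (xs ⟨0, by omega⟩)
    set w : ℕ → V := fun i =>
      if h : i < l then x ⟨i, h⟩
      else if i - (l - 1) ≤ p.length then p.getVert (i - (l - 1))
      else xs ⟨min (i - (l - 1) - p.length) (l - 1), by omega⟩ with hwdef
    set N : ℕ := l - 1 + p.length + l with hN
    have ha : ∀ i, l - 1 ≤ i → i ≤ l - 1 + p.length → w i = p.getVert (i - (l - 1)) := by
      intro i h1 h2
      simp only [hwdef]
      by_cases h : i < l
      · have hieq : i = l - 1 := by omega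
        subst hieq
        rw [dif_pos h]
        simp [SimpleGraph.Walk.getVert_zero]
      · rw [dif_neg h, if_pos (show i - (l - 1) ≤ p.length by omega)]
    have hbb : ∀ j : ℕ, w (l - 1 + p.length + j) = xs ⟨min j (l - 1), by omega⟩ := by
      intro j
      by_cases hj0 : j = 0
      · subst hj0
        rw [ha (l - 1 + p.length + 0) (by omega) (by omega)]
        rw [show l - 1 + p.length + 0 - (l - 1) = p.length by omega]
        rw [SimpleGraph.Walk.getVert_length]
        exact congrArg xs (Fin.ext (by simp <;> omega))
      · simp only [hwdef]
        rw [dif_neg (show ¬ l - 1 + p.length + j < l by omega),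
          if_neg (show ¬ (l - 1 + p.length + j - (l - 1) ≤ p.length) by omega)]
        exact congrArg xs (Fin.ext (by simp <;> omega))
    have hwadj : ∀ i, i + 1 < N → G.Adj (w i) (w (i+1)) := by
      intro i hi
      rcases lt_or_ge (i+1) l with h1 | h1
      · have e1 : w i = x ⟨i, by omega⟩ := by simp only [hwdef]; rw [dif_pos (by omega)]
        have e2 : w (i+1) = x ⟨i+1, h1⟩ := by simp only [hwdef]; rw [dif_pos h1]
        rw [e1, e2]
        exact hx i (by omega)
      · rcases lt_or_ge (i - (l-1)) p.length with h2 | h2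
        · rw [ha i (by omega) (by omega), ha (i+1) (by omega) (by omega)]
          have h3 := p.adj_getVert_succ h2
          rw [show i + 1 - (l-1) = (i - (l-1)) + 1 by omega]
          exact h3
        · have e1 := hbb (i - (l - 1 + p.length))
          rw [show l - 1 + p.length + (i - (l - 1 + p.length)) = i by omega] at e1
          have e2 := hbb (i + 1 - (l - 1 + p.length))
          rw [show l - 1 + p.length + (i + 1 - (l - 1 + p.length)) = i + 1 by omega] at e2
          rw [e1, e2]
          have h3 := hxs (i - (l - 1 + p.length)) (by omega)
          have q1 : (⟨min (i - (l - 1 + p.length)) (l - 1), by omega⟩ : Fin l)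
              = ⟨i - (l - 1 + p.length), by omega⟩ := Fin.ext (by simp <;> omega)
          have q2 : (⟨min (i + 1 - (l - 1 + p.length)) (l - 1), by omega⟩ : Fin l)
              = ⟨i - (l - 1 + p.length) + 1, by omega⟩ := Fin.ext (by simp <;> omega)
          rw [q1, q2]
          exact h3
    have hwin2 : (fun i : Fin l => w (0 + (l - 1 + p.length) + (i : ℕ))) = xs := by
      funext i
      rw [show 0 + (l - 1 + p.length) + (i:ℕ) = l - 1 + p.length + (i:ℕ) by omega]
      rw [hbb (i : ℕ)]
      exact congrArg xs (Fin.ext (by have hv := i.isLt; simp <;> omega))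
    have hwin0 : (fun i : Fin l => w (0 + (i : ℕ))) = x := by
      funext i
      simp only [hwdef]
      rw [show 0 + (i:ℕ) = (i:ℕ) by omega]
      rw [dif_pos i.isLt]
    have hfin := window_all w N hwadj (l - 1 + p.length) 0 (by omega) (by rw [hwin2]; exact hxse)
    rwa [hwin0] at hfin
  have hsum2 : ∑ x ∈ Finset.univ.filter (IsWalkSeq G l), μ x
      = c * ∑ x ∈ Finset.univ.filter (IsWalkSeq G l), piE G l x := by
    rw [Finset.mul_sum]
    exact Finset.sum_congr rfl (fun x hx => hall x (Finset.mem_filter.mp hx).2)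
  rw [hsum, sum_piE G hm hl, mul_one] at hsum2
  intro x hx
  rw [hall x hx, ← hsum2, one_mul]
end

section
/- Let M be a finite set and π: M → (0, ∞) a probability distribution (Σ_{X∈M} π(X) = 1). Let T ⊆ M carry an equivalence relation ∼ all of whose classes have the same size α ≥ 1, and for X ∈ T set p(X) = Σ_{Y ∈ T, Y ∼ X} π(Y). Define f(X) = 1/p(X) for X ∈ T and f(X) = 0 otherwise, and g(X) = 1/(α π(X)) for X ∈ T and g(X) = 0 otherwise. Then Var_π[f] ≤ Var_π[g], i.e., Σ_X π(X) f(X)² − (Σ_X π(X) f(X))² ≤ Σ_X π(X) g(X)² − (Σ_X π(X) g(X))². -/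
/-!
Each class `C` of `∼` contributes equally to both means, `∑_{Y ∈ C} π Y f Y = 1 =
∑_{Y ∈ C} π Y g Y`, while to the second moments it contributes `1 / p(C)` for `f` and
`∑_{Y ∈ C} 1 / (α² π Y) ≥ 1 / p(C)` for `g`, by Sedrakyan's form of Cauchy–Schwarz. Each `Y ∈ T`
lies in the classes of exactly `α` elements of `T`, so `∑_{X ∈ T} ∑_{Y ∼ X} = α ∑_{Y ∈ T}` and the
class-wise comparisons add up to comparisons of the sums over `T`.
-/

open Finset

section EquivalenceClasses

variable {ι : Type*} {T : Finset ι} {r : ι → ι → Prop} [DecidableRel r]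

theorem filter_rel_eq_of_mem_filter_rel
    (hsymm : ∀ X ∈ T, ∀ Y ∈ T, r X Y → r Y X)
    (htrans : ∀ X ∈ T, ∀ Y ∈ T, ∀ Z ∈ T, r X Y → r Y Z → r X Z)
    {X Y : ι} (hX : X ∈ T) (hY : Y ∈ T.filter (fun Z => r X Z)) :
    T.filter (fun Z => r Y Z) = T.filter (fun Z => r X Z) := by
  obtain ⟨hYT, hXY⟩ := mem_filter.mp hY
  ext Z
  simp only [mem_filter, and_congr_right_iff]
  exact fun hZ => ⟨htrans X hX Y hYT Z hZ hXY, htrans Y hYT X hX Z hZ (hsymm X hX Y hYT hXY)⟩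

theorem sum_sum_filter_rel_eq_nsmul_sum {β : Type*} [AddCommMonoid β]
    (hsymm : ∀ X ∈ T, ∀ Y ∈ T, r X Y → r Y X) {α : ℕ}
    (hclass : ∀ X ∈ T, (T.filter (fun Y => r X Y)).card = α) (h : ι → β) :
    ∑ X ∈ T, ∑ Y ∈ T.filter (fun Y => r X Y), h Y = α • ∑ Y ∈ T, h Y := by
  rw [sum_comm' (t' := T) (s' := fun Y => T.filter (fun X => r Y X)), smul_sum]
  · exact sum_congr rfl fun Y hY => by rw [sum_const, hclass Y hY]
  · intro X Y
    simp only [mem_filter]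
    exact ⟨fun ⟨hX, hY, hXY⟩ => ⟨⟨hX, hsymm X hX Y hY hXY⟩, hY⟩,
      fun ⟨⟨hX, hYX⟩, hY⟩ => ⟨hX, hY, hsymm Y hY X hX hYX⟩⟩

variable {β : Type*} [AddCommMonoid β] [LinearOrder β] [IsOrderedCancelAddMonoid β]
  {α : ℕ} {h k : ι → β}

theorem sum_le_sum_of_sum_filter_rel_le
    (hsymm : ∀ X ∈ T, ∀ Y ∈ T, r X Y → r Y X) (hα : α ≠ 0)
    (hclass : ∀ X ∈ T, (T.filter (fun Y => r X Y)).card = α)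
    (hle : ∀ X ∈ T,
      ∑ Y ∈ T.filter (fun Y => r X Y), h Y ≤ ∑ Y ∈ T.filter (fun Y => r X Y), k Y) :
    ∑ Y ∈ T, h Y ≤ ∑ Y ∈ T, k Y := by
  rw [← nsmul_le_nsmul_iff_right hα, ← sum_sum_filter_rel_eq_nsmul_sum hsymm hclass,
    ← sum_sum_filter_rel_eq_nsmul_sum hsymm hclass]
  exact sum_le_sum hle

theorem sum_eq_sum_of_sum_filter_rel_eq
    (hsymm : ∀ X ∈ T, ∀ Y ∈ T, r X Y → r Y X) (hα : α ≠ 0)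
    (hclass : ∀ X ∈ T, (T.filter (fun Y => r X Y)).card = α)
    (heq : ∀ X ∈ T,
      ∑ Y ∈ T.filter (fun Y => r X Y), h Y = ∑ Y ∈ T.filter (fun Y => r X Y), k Y) :
    ∑ Y ∈ T, h Y = ∑ Y ∈ T, k Y :=
  le_antisymm (sum_le_sum_of_sum_filter_rel_le hsymm hα hclass fun X hX => (heq X hX).le)
    (sum_le_sum_of_sum_filter_rel_le hsymm hα hclass fun X hX => (heq X hX).ge)

end EquivalenceClasses

section ClassReweighting

variable {ι : Type*} {s : Finset ι} {w u v : ι → ℝ}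

theorem sum_mul_inv_mass_eq_sum_mul_inv_card_mul (hs : s.Nonempty) (hw : ∀ Y ∈ s, 0 < w Y)
    (hu : ∀ Y ∈ s, u Y = 1 / ∑ Z ∈ s, w Z) (hv : ∀ Y ∈ s, v Y = 1 / ((s.card : ℝ) * w Y)) :
    ∑ Y ∈ s, w Y * u Y = ∑ Y ∈ s, w Y * v Y := by
  have hcard : (s.card : ℝ) ≠ 0 := by exact_mod_cast hs.card_pos.ne'
  have hmass : ∑ Y ∈ s, w Y ≠ 0 := (sum_pos hw hs).ne'
  calc ∑ Y ∈ s, w Y * u Y = 1 := by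
        rw [sum_congr rfl fun Y hY => by rw [hu Y hY], ← sum_mul, mul_one_div_cancel hmass]
    _ = ∑ Y ∈ s, 1 / (s.card : ℝ) := by rw [sum_const, nsmul_eq_mul, mul_one_div_cancel hcard]
    _ = ∑ Y ∈ s, w Y * v Y :=
        sum_congr rfl fun Y hY => by rw [hv Y hY]; field_simp [(hw Y hY).ne']

theorem sum_mul_inv_mass_sq_le_sum_mul_inv_card_mul_sq (hs : s.Nonempty) (hw : ∀ Y ∈ s, 0 < w Y)
    (hu : ∀ Y ∈ s, u Y = 1 / ∑ Z ∈ s, w Z) (hv : ∀ Y ∈ s, v Y = 1 / ((s.card : ℝ) * w Y)) :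
    ∑ Y ∈ s, w Y * u Y ^ 2 ≤ ∑ Y ∈ s, w Y * v Y ^ 2 := by
  have hcard : (s.card : ℝ) ≠ 0 := by exact_mod_cast hs.card_pos.ne'
  have hmass : ∑ Y ∈ s, w Y ≠ 0 := (sum_pos hw hs).ne'
  have hsedrakyan := sq_sum_div_le_sum_sq_div s (fun _ => 1 / (s.card : ℝ)) hw
  rw [sum_const, nsmul_eq_mul, mul_one_div_cancel hcard, one_pow] at hsedrakyan
  calc ∑ Y ∈ s, w Y * u Y ^ 2 = 1 / ∑ Y ∈ s, w Y := by
        rw [sum_congr rfl fun Y hY => by rw [hu Y hY], ← sum_mul]; field_simp [hmass]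
    _ ≤ ∑ Y ∈ s, (1 / (s.card : ℝ)) ^ 2 / w Y := hsedrakyan
    _ = ∑ Y ∈ s, w Y * v Y ^ 2 :=
        sum_congr rfl fun Y hY => by rw [hv Y hY]; field_simp [(hw Y hY).ne']

end ClassReweighting

theorem css_variance_le_basic_variance_general
    {M : Type*} [Fintype M] [DecidableEq M] (π : M → ℝ) (hπ : ∀ X : M, 0 < π X)
    (T : Finset M) (r : M → M → Prop) [DecidableRel r]
    (hsymm : ∀ X ∈ T, ∀ Y ∈ T, r X Y → r Y X)
    (htrans : ∀ X ∈ T, ∀ Y ∈ T, ∀ Z ∈ T, r X Y → r Y Z → r X Z)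
    (α : ℕ) (hα : 1 ≤ α)
    (hclass : ∀ X ∈ T, (T.filter (fun Y => r X Y)).card = α)
    (f g : M → ℝ)
    (hf : ∀ X : M, f X = if X ∈ T then 1 / ∑ Y ∈ T.filter (fun Y => r X Y), π Y else 0)
    (hg : ∀ X : M, g X = if X ∈ T then 1 / ((α : ℝ) * π X) else 0) :
    ∑ X : M, π X * f X ^ 2 - (∑ X : M, π X * f X) ^ 2
      ≤ ∑ X : M, π X * g X ^ 2 - (∑ X : M, π X * g X) ^ 2 := by
  have hα0 : α ≠ 0 := by omega
  have hnonempty (X) (hX : X ∈ T) : (T.filter (fun Y => r X Y)).Nonempty :=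
    card_pos.mp (by rw [hclass X hX]; omega)
  have hf_class (X) (hX : X ∈ T) (Y) (hY : Y ∈ T.filter (fun Y => r X Y)) :
      f Y = 1 / ∑ Z ∈ T.filter (fun Z => r X Z), π Z := by
    rw [hf, if_pos (mem_filter.mp hY).1, filter_rel_eq_of_mem_filter_rel hsymm htrans hX hY]
  have hg_class (X) (hX : X ∈ T) (Y) (hY : Y ∈ T.filter (fun Y => r X Y)) :
      g Y = 1 / (((T.filter (fun Y => r X Y)).card : ℝ) * π Y) := by
    rw [hg, if_pos (mem_filter.mp hY).1, hclass X hX]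
  have hsum_T (F : M → ℝ) (hF : ∀ X ∉ T, F X = 0) : ∑ X, π X * F X = ∑ X ∈ T, π X * F X :=
    (sum_subset (subset_univ T) fun X _ hX => by rw [hF X hX, mul_zero]).symm
  have hf_out (X) (hX : X ∉ T) : f X = 0 := by rw [hf, if_neg hX]
  have hg_out (X) (hX : X ∉ T) : g X = 0 := by rw [hg, if_neg hX]
  have hmean : ∑ X, π X * f X = ∑ X, π X * g X := by
    rw [hsum_T f hf_out, hsum_T g hg_out]
    exact sum_eq_sum_of_sum_filter_rel_eq hsymm hα0 hclass fun X hX =>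
      sum_mul_inv_mass_eq_sum_mul_inv_card_mul (hnonempty X hX) (fun Y _ => hπ Y)
        (hf_class X hX) (hg_class X hX)
  have hsecond : ∑ X, π X * f X ^ 2 ≤ ∑ X, π X * g X ^ 2 := by
    rw [hsum_T (f · ^ 2) fun X hX => by simp [hf_out X hX],
      hsum_T (g · ^ 2) fun X hX => by simp [hg_out X hX]]
    exact sum_le_sum_of_sum_filter_rel_le hsymm hα0 hclass fun X hX =>
      sum_mul_inv_mass_sq_le_sum_mul_inv_card_mul_sq (hnonempty X hX) (fun Y _ => hπ Y)
        (hf_class X hX) (hg_class X hX)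
  rw [hmean]
  linarith

/-- variance comparison between the corresponding-state-sampling
reweighting function `f` and the basic reweighting function `g`.  Here `π` is a
positive probability distribution on the finite set `M`, `T ⊆ M` carries an
equivalence relation `r` all of whose classes have size `α ≥ 1`, and for `X ∈ T`,
`p(X) = Σ_{Y ∈ T, Y ∼ X} π(Y)`.  Then `Var_π[f] ≤ Var_π[g]`. -/
theorem css_variance_le_basic_variance
    {M : Type*} [Fintype M] [DecidableEq M] (π : M → ℝ) (hπ : ∀ X : M, 0 < π X)
    (hsum : ∑ X : M, π X = 1)
    (T : Finset M) (r : M → M → Prop) [DecidableRel r]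
    (hrefl : ∀ X ∈ T, r X X)
    (hsymm : ∀ X ∈ T, ∀ Y ∈ T, r X Y → r Y X)
    (htrans : ∀ X ∈ T, ∀ Y ∈ T, ∀ Z ∈ T, r X Y → r Y Z → r X Z)
    (α : ℕ) (hα : 1 ≤ α)
    (hclass : ∀ X ∈ T, (T.filter (fun Y => r X Y)).card = α)
    (f g : M → ℝ)
    (hf : ∀ X : M, f X = if X ∈ T then 1 / ∑ Y ∈ T.filter (fun Y => r X Y), π Y else 0)
    (hg : ∀ X : M, g X = if X ∈ T then 1 / ((α : ℝ) * π X) else 0) :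
    ∑ X : M, π X * f X ^ 2 - (∑ X : M, π X * f X) ^ 2
      ≤ ∑ X : M, π X * g X ^ 2 - (∑ X : M, π X * g X) ^ 2 :=
  css_variance_le_basic_variance_general π hπ T r hsymm htrans α hα hclass f g hf hg
end

section
/- Let G = (V, E) be a finite connected simple graph with n vertices and let 1 ≤ d ≤ n. Let H^(d) be the set of all d-element subsets S of V whose induced subgraph G[S] is connected, and let G^(d) be the graph on vertex set H^(d) in which two distinct subsets S, S′ ∈ H^(d) are adjacent if and only if |S ∩ S′| = d − 1. Then G^(d) is connected. -/
open Finset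

/-!
If `x` is adjacent to a connected `d`-set `A` and `D ⊆ A ∪ {x}` is connected with `|D| ≤ d`, then
deleting a suitable vertex outside `D` from `A ∪ {x}` leaves a connected `d`-set that is adjacent
or equal to `A` in `G⁽ᵈ⁾` and contains `D`. Such a vertex exists because a connected proper subset
of a connected set `W` can be grown inside `W` one neighbour at a time, and the last vertex added
is removable. Sliding one vertex along a walk of `G` moves `A` to a set meeting `B`; growing a
connected `D ⊆ A ∩ B` from that vertex to all of `B` then moves it onto `B`.
-/

namespace SimpleGraph

variable {V : Type*} {G : SimpleGraph V}

lemma Preconnected.exists_adj_mem_notMem (hG : G.Preconnected) {s : Set V} {x y : V}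
    (hx : x ∈ s) (hy : y ∉ s) : ∃ a ∈ s, ∃ b ∉ s, G.Adj a b := by
  obtain ⟨⟨⟨a, b⟩, hab⟩, -, ha, hb⟩ := (hG x y).some.exists_boundary_dart s hx hy
  exact ⟨a, ha, b, hb, hab⟩

lemma induce_singleton_connected (v : V) : (G.induce {v}).Connected := by
  rw [induce_singleton_eq_top]
  exact connected_top

lemma induce_insert_connected {s : Set V} (hs : (G.induce s).Connected) {a x : V} (ha : a ∈ s)
    (hax : G.Adj a x) : (G.induce (insert x s)).Connected := by
  rw [Set.insert_eq, Set.union_comm]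
  exact connected_induce_union hs.preconnected (induce_singleton_connected x).preconnected
    ha rfl hax

lemma exists_adj_of_induce_connected {s t : Set V} (hs : (G.induce s).Connected) {x y : V}
    (hx : x ∈ s ∩ t) (hy : y ∈ s \ t) : ∃ a ∈ s ∩ t, ∃ b ∈ s \ t, G.Adj a b := by
  obtain ⟨a, ha, b, hb, hab⟩ := hs.preconnected.exists_adj_mem_notMem
    (s := Subtype.val ⁻¹' t) (x := ⟨x, hx.1⟩) (y := ⟨y, hy.1⟩) hx.2 hy.2
  exact ⟨a, ⟨a.2, ha⟩, b, ⟨b.2, hb⟩, hab⟩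

lemma Connected.exists_card_eq_induce_connected [Fintype V] (hG : G.Connected) {d : ℕ}
    (hd1 : 1 ≤ d) (hdn : d ≤ Fintype.card V) :
    ∃ S : Finset V, #S = d ∧ (G.induce (S : Set V)).Connected := by
  classical
  induction d, hd1 using Nat.le_induction with
  | base =>
    obtain ⟨v⟩ := hG.nonempty
    exact ⟨{v}, card_singleton v, by rw [coe_singleton]; exact induce_singleton_connected v⟩
  | succ k hk ih =>
    obtain ⟨S, hSk, hS⟩ := ih (by omega)
    obtain ⟨x, hx⟩ := card_pos.1 (hSk ▸ hk)
    obtain ⟨y, -, hy⟩ := exists_of_ssubset (ssubset_univ_iff.2 fun h : S = univ ↦ by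
      rw [h, card_univ] at hSk; omega)
    obtain ⟨a, ha, b, hb, hab⟩ := hG.preconnected.exists_adj_mem_notMem (s := ↑S) hx hy
    refine ⟨insert b S, by rw [card_insert_of_notMem hb, hSk], ?_⟩
    rw [coe_insert]
    exact induce_insert_connected hS ha hab

variable [DecidableEq V]

theorem exists_induce_erase_connected {W D : Finset V} (hW : (G.induce (W : Set V)).Connected)
    (hD : (G.induce (D : Set V)).Connected) (hDW : D ⊂ W) :
    ∃ u ∈ W \ D, (G.induce (W.erase u : Set V)).Connected := by
  induction hn : #(W \ D) generalizing D with
  | zero => exact ((card_pos.2 (sdiff_nonempty.2 (not_subset_of_ssubset hDW))).ne' hn).elim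
  | succ n ih =>
    obtain ⟨⟨x, hx⟩⟩ := hD.nonempty
    obtain ⟨y, hyW, hyD⟩ := exists_of_ssubset hDW
    obtain ⟨a, ha, b, ⟨hbW, hbD⟩, hab⟩ :=
      exists_adj_of_induce_connected (t := D) hW ⟨hDW.subset hx, hx⟩ ⟨hyW, hyD⟩
    have hD' : (G.induce (insert b D : Finset V)).Connected := by
      rw [coe_insert]; exact induce_insert_connected hD ha.2 hab
    by_cases hW' : insert b D = W
    · refine ⟨b, mem_sdiff.2 ⟨hbW, hbD⟩, ?_⟩
      rwa [← hW', erase_insert hbD]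
    · obtain ⟨u, hu, hWu⟩ := ih hD' (ssubset_of_ne_of_subset hW' (insert_subset hbW hDW.subset))
        (by rw [sdiff_insert, card_erase_of_mem (mem_sdiff.2 ⟨hbW, hbD⟩), hn]; rfl)
      exact ⟨u, sdiff_subset_sdiff le_rfl (subset_insert b D) hu, hWu⟩

-- The paper's `H⁽ᵈ⁾` and `G⁽ᵈ⁾`.
abbrev ConnectedFinset (G : SimpleGraph V) (d : ℕ) :=
  {S : Finset V // #S = d ∧ (G.induce (S : Set V)).Connected}

abbrev subgraphRelationGraph (G : SimpleGraph V) (d : ℕ) : SimpleGraph (G.ConnectedFinset d) :=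
  fromRel fun A B => #(A.1 ∩ B.1) = d - 1

namespace subgraphRelationGraph

variable {d : ℕ}

lemma reachable_of_le_card_inter {A B : G.ConnectedFinset d} (h : d - 1 ≤ #(A.1 ∩ B.1)) :
    (G.subgraphRelationGraph d).Reachable A B := by
  obtain rfl | hAB := eq_or_ne A B
  · rfl
  have hne : A.1 ∩ B.1 ≠ A.1 := fun h ↦
    hAB (Subtype.ext (eq_of_subset_of_card_le (inter_eq_left.1 h) (by rw [A.2.1, B.2.1])))
  have hlt := card_lt_card (ssubset_of_ne_of_subset hne inter_subset_left)
  exact Adj.reachable ⟨hAB, Or.inl (by rw [A.2.1] at hlt; omega)⟩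

lemma exists_reachable_superset_of_adj (A : G.ConnectedFinset d) {a x : V} (ha : a ∈ A.1)
    (hax : G.Adj a x) {D : Finset V} (hD : (G.induce (D : Set V)).Connected)
    (hDA : D ⊆ insert x A.1) (hDd : #D ≤ d) :
    ∃ A' : G.ConnectedFinset d, (G.subgraphRelationGraph d).Reachable A A' ∧ D ⊆ A'.1 := by
  by_cases hxA : x ∈ A.1
  · exact ⟨A, .rfl, insert_eq_of_mem hxA ▸ hDA⟩
  have hW : (G.induce (insert x A.1 : Finset V)).Connected := by
    rw [coe_insert]; exact induce_insert_connected A.2.2 ha hax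
  have hcard : #(insert x A.1) = d + 1 := by rw [card_insert_of_notMem hxA, A.2.1]
  obtain ⟨u, hu, hWu⟩ := exists_induce_erase_connected hW hD
    (ssubset_of_subset_of_ne hDA (by rintro rfl; omega))
  obtain ⟨huW, huD⟩ := mem_sdiff.1 hu
  let A' : G.ConnectedFinset d :=
    ⟨(insert x A.1).erase u, by rw [card_erase_of_mem huW]; omega, hWu⟩
  refine ⟨A', reachable_of_le_card_inter ?_, fun v hv ↦ mem_erase.2 ⟨?_, hDA hv⟩⟩
  · calc d - 1 = #A.1 - 1 := by rw [A.2.1]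
      _ ≤ #(A.1.erase u) := pred_card_le_card_erase
      _ ≤ #(A.1 ∩ A'.1) := card_le_card fun v hv ↦ by grind
  · rintro rfl; exact huD hv

lemma exists_reachable_mem_of_walk {v w : V} (p : G.Walk v w) (A : G.ConnectedFinset d)
    (hv : v ∈ A.1) :
    ∃ A' : G.ConnectedFinset d, (G.subgraphRelationGraph d).Reachable A A' ∧ w ∈ A'.1 := by
  induction p generalizing A with
  | nil => exact ⟨A, .rfl, hv⟩
  | @cons _ u _ hadj p ih =>
    obtain ⟨A₁, hA₁, hu⟩ := exists_reachable_superset_of_adj A hv hadj (D := {u})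
      (by rw [coe_singleton]; exact induce_singleton_connected u)
      (singleton_subset_iff.2 (mem_insert_self u A.1)) (A.2.1 ▸ card_pos.2 ⟨_, hv⟩)
    obtain ⟨A₂, hA₂, hw⟩ := ih A₁ (singleton_subset_iff.1 hu)
    exact ⟨A₂, hA₁.trans hA₂, hw⟩

lemma exists_reachable_superset {C D : Finset V} (hC : (G.induce (C : Set V)).Connected)
    (hCd : #C ≤ d) (hD : (G.induce (D : Set V)).Connected) (hDC : D ⊆ C)
    (A : G.ConnectedFinset d) (hDA : D ⊆ A.1) :
    ∃ A' : G.ConnectedFinset d, (G.subgraphRelationGraph d).Reachable A A' ∧ C ⊆ A'.1 := by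
  induction hn : #(C \ D) generalizing D A with
  | zero => exact ⟨A, .rfl, (sdiff_eq_empty_iff_subset.1 (card_eq_zero.1 hn)).trans hDA⟩
  | succ n ih =>
    obtain ⟨⟨x, hx⟩⟩ := hD.nonempty
    obtain ⟨y, hy⟩ := (card_pos (s := C \ D)).1 (by omega)
    obtain ⟨a, ha, b, hb, hab⟩ :=
      exists_adj_of_induce_connected (t := D) hC ⟨hDC hx, hx⟩ (mem_sdiff.1 hy)
    have hD' : (G.induce (insert b D : Finset V)).Connected := by
      rw [coe_insert]; exact induce_insert_connected hD ha.2 hab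
    have hbDC : insert b D ⊆ C := insert_subset hb.1 hDC
    obtain ⟨A₁, hA₁, hbDA₁⟩ := exists_reachable_superset_of_adj A (hDA ha.2) hab hD'
      (insert_subset_insert b hDA) ((card_le_card hbDC).trans hCd)
    obtain ⟨A₂, hA₂, hCA₂⟩ := ih hD' hbDC A₁ hbDA₁
      (by rw [sdiff_insert, card_erase_of_mem (mem_sdiff.2 hb), hn]; rfl)
    exact ⟨A₂, hA₁.trans hA₂, hCA₂⟩

end subgraphRelationGraph

theorem Preconnected.subgraphRelationGraph (hG : G.Preconnected) (d : ℕ) :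
    (G.subgraphRelationGraph d).Preconnected := by
  intro A B
  obtain ⟨⟨v, hv⟩⟩ := A.2.2.nonempty
  obtain ⟨⟨b, hb⟩⟩ := B.2.2.nonempty
  obtain ⟨A₁, hA₁, hbA₁⟩ := subgraphRelationGraph.exists_reachable_mem_of_walk (hG v b).some A hv
  obtain ⟨A₂, hA₂, hBA₂⟩ := subgraphRelationGraph.exists_reachable_superset B.2.2 B.2.1.le
    (D := {b}) (by rw [coe_singleton]; exact induce_singleton_connected b)
    (singleton_subset_iff.2 hb) A₁ (singleton_subset_iff.2 hbA₁)
  refine (hA₁.trans hA₂).trans (subgraphRelationGraph.reachable_of_le_card_inter ?_)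
  rw [inter_eq_right.2 hBA₂, B.2.1]
  exact d.sub_le 1

end SimpleGraph

/-- let `G` be a finite connected simple graph on `n` vertices and
`1 ≤ d ≤ n`.  Let `H⁽ᵈ⁾` be the collection of `d`-element vertex subsets inducing a
connected subgraph, and let `G⁽ᵈ⁾` be the graph on `H⁽ᵈ⁾` where two distinct subsets
are adjacent iff they share exactly `d − 1` common vertices.  Then `G⁽ᵈ⁾` is
connected. -/
theorem subgraph_relationship_graph_connected
    {V : Type*} [Fintype V] [DecidableEq V] (G : SimpleGraph V)
    (hconn : G.Connected) (d : ℕ) (hd1 : 1 ≤ d) (hdn : d ≤ Fintype.card V) :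
    (SimpleGraph.fromRel
      (fun A B : {S : Finset V // S.card = d ∧ (G.induce (↑S : Set V)).Connected} =>
        ((A : Finset V) ∩ (B : Finset V)).card = d - 1)).Connected := by
  obtain ⟨S, hSd, hS⟩ := hconn.exists_card_eq_induce_connected hd1 hdn
  exact (SimpleGraph.connected_iff _).2
    ⟨hconn.preconnected.subgraphRelationGraph d, ⟨⟨S, hSd, hS⟩⟩⟩
end
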